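/- Let ω ∈ ℝ and suppose γ(ρ) = ∫₀¹ g(t) cos(ρt) dt for some g ∈ L²((0,1); ℝ). Define r(ρ²) = sin(ρ)/ρ + ω cos(ρ)/ρ² + γ(ρ)/ρ². Then for ρₙ = πn + ω/(πn) + κₙ/n with (κₙ) ∈ ℓ², the values (d/dρ)[r(ρ²)] evaluated at ρₙ, divided by 2ρₙ, satisfy: 2(πn)²·(that value)·(−1)ⁿ → 1 as n → ∞. -/

import Mathlib

open Real MeasureTheory Filter Topology

set_option maxHeartbeats 1000000 in
theorem stmt19 (ω : ℝ) (g : ℝ → ℝ)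
    (hg : MemLp g 2 (volume.restrict (Set.Ioc (0:ℝ) 1)))
    (ρ κ : ℕ → ℝ) (hκ : Summable fun n => (κ n) ^ 2)
    (hρ : ∀ n : ℕ, 1 ≤ n → ρ n = π * n + ω / (π * n) + κ n / n) :
    Tendsto (fun n : ℕ =>
        2 * (π * n) ^ 2 * (-1) ^ n *
          (deriv (fun x : ℝ =>
              Real.sin x / x + ω * Real.cos x / x ^ 2 +
                (∫ t in (0:ℝ)..1, g t * Real.cos (x * t)) / x ^ 2) (ρ n) /
            (2 * ρ n)))
      atTop (nhds 1) := by
  classical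
  -- basic integrability facts about g
  haveI hfin : IsFiniteMeasure (volume.restrict (Set.Ioc (0:ℝ) 1)) := by
    constructor
    rw [Measure.restrict_apply_univ, Real.volume_Ioc]
    norm_num
  have hgi : IntegrableOn g (Set.Ioc (0:ℝ) 1) := hg.integrable one_le_two
  have hgm : AEStronglyMeasurable g (volume.restrict (Set.Ioc (0:ℝ) 1)) := hg.1
  have huIoc : Set.uIoc (0:ℝ) 1 = Set.Ioc (0:ℝ) 1 := Set.uIoc_of_le zero_le_one
  have hgii : IntervalIntegrable g volume 0 1 :=
    (intervalIntegrable_iff_integrableOn_Ioc_of_le zero_le_one).mpr hgi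
  set G : ℝ → ℝ := fun x => ∫ t in (0:ℝ)..1, g t * Real.cos (x * t) with hGdef
  set G' : ℝ → ℝ := fun x => ∫ t in (0:ℝ)..1, g t * (-Real.sin (x * t) * t) with hG'def
  set Cg : ℝ := ∫ t in (0:ℝ)..1, |g t| with hCgdef
  -- integrability of the integrands
  have hFint : ∀ x : ℝ, IntervalIntegrable (fun t => g t * Real.cos (x * t)) volume 0 1 := by
    intro x
    rw [intervalIntegrable_iff_integrableOn_Ioc_of_le zero_le_one]
    refine Integrable.mono' hgi.abs
      (hgm.mul ((Real.continuous_cos.comp (continuous_const.mul continuous_id)).aestronglyMeasurable))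
      (Filter.Eventually.of_forall fun t => ?_)
    have : ‖g t * Real.cos (x * t)‖ = |g t| * |Real.cos (x * t)| := abs_mul _ _
    rw [this]
    exact mul_le_of_le_one_right (abs_nonneg _) (Real.abs_cos_le_one _)
  have hF'int : ∀ x : ℝ, IntervalIntegrable (fun t => g t * (-Real.sin (x * t) * t)) volume 0 1 := by
    intro x
    rw [intervalIntegrable_iff_integrableOn_Ioc_of_le zero_le_one]
    refine Integrable.mono' hgi.abs
      (hgm.mul (((Real.continuous_sin.comp (continuous_const.mul continuous_id)).neg.mul
        continuous_id).aestronglyMeasurable))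
      ((ae_restrict_iff' measurableSet_Ioc).2 (Filter.Eventually.of_forall fun t ht => ?_))
    have habs : ‖g t * (-Real.sin (x * t) * t)‖ = |g t| * (|Real.sin (x * t)| * |t|) := by
      rw [Real.norm_eq_abs, abs_mul, abs_mul, abs_neg]
    rw [habs]
    have ht1 : |t| ≤ 1 := abs_le.2 ⟨by linarith [ht.1], ht.2⟩
    have : |Real.sin (x * t)| * |t| ≤ 1 :=
      mul_le_one₀ (Real.abs_sin_le_one _) (abs_nonneg _) ht1
    exact mul_le_of_le_one_right (abs_nonneg _) this
  -- derivative of G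
  have hkey : ∀ x : ℝ, HasDerivAt G (G' x) x := by
    intro x
    have hgm' : AEStronglyMeasurable g (volume.restrict (Set.uIoc (0:ℝ) 1)) := by
      rw [huIoc]; exact hgm
    have h := intervalIntegral.hasDerivAt_integral_of_dominated_loc_of_deriv_le
      (F := fun y t => g t * Real.cos (y * t)) (F' := fun y t => g t * (-Real.sin (y * t) * t))
      (x₀ := x) (a := (0:ℝ)) (b := 1) (μ := volume) (bound := fun t => |g t|) (s := Metric.ball x 1)
      (Metric.ball_mem_nhds x one_pos)
      (Filter.Eventually.of_forall fun y =>
        hgm'.mul ((Real.continuous_cos.comp (continuous_const.mul continuous_id)).aestronglyMeasurable))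
      (hFint x)
      (hgm'.mul (((Real.continuous_sin.comp (continuous_const.mul continuous_id)).neg.mul
        continuous_id).aestronglyMeasurable))
      (Filter.Eventually.of_forall ?_) (hgii.abs) (Filter.Eventually.of_forall ?_)
    · exact h.2
    · intro t ht y _hy
      rw [huIoc] at ht
      have habs : ‖g t * (-Real.sin (y * t) * t)‖ = |g t| * (|Real.sin (y * t)| * |t|) := by
        rw [Real.norm_eq_abs, abs_mul, abs_mul, abs_neg]
      rw [habs]
      have ht1 : |t| ≤ 1 := abs_le.2 ⟨by linarith [ht.1], ht.2⟩
      have : |Real.sin (y * t)| * |t| ≤ 1 :=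
        mul_le_one₀ (Real.abs_sin_le_one _) (abs_nonneg _) ht1
      exact mul_le_of_le_one_right (abs_nonneg _) this
    · intro t _ht y _hy
      have h1 : HasDerivAt (fun y : ℝ => y * t) t y := hasDerivAt_mul_const t
      have h2 : HasDerivAt (fun y : ℝ => Real.cos (y * t)) (-Real.sin (y * t) * t) y :=
        by have := (Real.hasDerivAt_cos (y * t)).comp y h1; exact this
      exact h2.const_mul (g t)
  -- bounds for G and G'
  have hCg0 : 0 ≤ Cg := by
    rw [hCgdef]
    exact intervalIntegral.integral_nonneg zero_le_one fun t _ => abs_nonneg _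
  have hGb : ∀ x : ℝ, |G x| ≤ Cg := by
    intro x
    refine le_trans (intervalIntegral.abs_integral_le_integral_abs zero_le_one) ?_
    refine intervalIntegral.integral_mono_on zero_le_one (hFint x).abs hgii.abs fun t _ => ?_
    rw [abs_mul]
    exact mul_le_of_le_one_right (abs_nonneg _) (Real.abs_cos_le_one _)
  have hG'b : ∀ x : ℝ, |G' x| ≤ Cg := by
    intro x
    refine le_trans (intervalIntegral.abs_integral_le_integral_abs zero_le_one) ?_
    refine intervalIntegral.integral_mono_on zero_le_one (hF'int x).abs hgii.abs fun t ht => ?_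
    rw [abs_mul, abs_mul, abs_neg]
    have ht1 : |t| ≤ 1 := abs_le.2 ⟨by linarith [ht.1], ht.2⟩
    have : |Real.sin (x * t)| * |t| ≤ 1 :=
      mul_le_one₀ (Real.abs_sin_le_one _) (abs_nonneg _) ht1
    exact mul_le_of_le_one_right (abs_nonneg _) this
  -- derivative formula
  have hD : ∀ p : ℝ, p ≠ 0 →
      deriv (fun x : ℝ =>
          Real.sin x / x + ω * Real.cos x / x ^ 2 +
            (∫ t in (0:ℝ)..1, g t * Real.cos (x * t)) / x ^ 2) p =
        Real.cos p / p - (1 + ω) * Real.sin p / p ^ 2 - 2 * ω * Real.cos p / p ^ 3 +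
          G' p / p ^ 2 - 2 * G p / p ^ 3 := by
    intro p hp
    have hp2 : HasDerivAt (fun x : ℝ => x ^ 2) (2 * p) p := by
      simpa using hasDerivAt_pow 2 p
    have hp2ne : p ^ 2 ≠ 0 := pow_ne_zero 2 hp
    have h1 : HasDerivAt (fun x : ℝ => Real.sin x / x)
        ((Real.cos p * p - Real.sin p * 1) / p ^ 2) p :=
      (Real.hasDerivAt_sin p).div (hasDerivAt_id' p) hp
    have h2 : HasDerivAt (fun x : ℝ => ω * Real.cos x / x ^ 2)
        ((ω * -Real.sin p * p ^ 2 - ω * Real.cos p * (2 * p)) / (p ^ 2) ^ 2) p :=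
      ((Real.hasDerivAt_cos p).const_mul ω).div hp2 hp2ne
    have h3 : HasDerivAt (fun x : ℝ => (∫ t in (0:ℝ)..1, g t * Real.cos (x * t)) / x ^ 2)
        ((G' p * p ^ 2 - G p * (2 * p)) / (p ^ 2) ^ 2) p :=
      (hkey p).div hp2 hp2ne
    have hAll : HasDerivAt (fun x : ℝ =>
        Real.sin x / x + ω * Real.cos x / x ^ 2 +
          (∫ t in (0:ℝ)..1, g t * Real.cos (x * t)) / x ^ 2)
        ((Real.cos p * p - Real.sin p * 1) / p ^ 2 +
          (ω * -Real.sin p * p ^ 2 - ω * Real.cos p * (2 * p)) / (p ^ 2) ^ 2 +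
          (G' p * p ^ 2 - G p * (2 * p)) / (p ^ 2) ^ 2) p := (h1.add h2).add h3
    rw [hAll.deriv]
    field_simp
    ring
  -- the perturbation E
  set E : ℕ → ℝ := fun n => ω / (π * n) + κ n / n with hEdef
  have hρE : ∀ n : ℕ, 1 ≤ n → ρ n = π * n + E n := by
    intro n hn
    rw [hρ n hn, hEdef]
    ring
  have hπ3 : (3:ℝ) ≤ π := by linarith [Real.pi_gt_three]
  -- eventually |κ n| ≤ 1
  have hκ1 : ∀ᶠ n : ℕ in atTop, |κ n| ≤ 1 := by
    have h0 : Tendsto (fun n => κ n ^ 2) atTop (𝓝 0) := hκ.tendsto_atTop_zero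
    have h1 : ∀ᶠ n : ℕ in atTop, κ n ^ 2 < 1 := h0.eventually_lt_const one_pos
    filter_upwards [h1] with n hn
    nlinarith [sq_abs (κ n), abs_nonneg (κ n)]
  -- bound on E
  have hEbound : ∀ n : ℕ, 1 ≤ n → |κ n| ≤ 1 → |E n| ≤ (|ω| + 1) * (n : ℝ)⁻¹ := by
    intro n hn hκn
    have hnR : (1:ℝ) ≤ (n : ℝ) := by exact_mod_cast hn
    have hnpos : (0:ℝ) < n := by linarith
    have hπnpos : (0:ℝ) < π * n := by positivity
    have h1 : |ω / (π * n)| ≤ |ω| / n := by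
      rw [abs_div, abs_of_pos hπnpos]
      gcongr
      nlinarith
    have h2 : |κ n / n| ≤ 1 / n := by
      rw [abs_div, abs_of_pos hnpos]
      gcongr
    calc |E n| ≤ |ω / (π * n)| + |κ n / n| := abs_add_le _ _
      _ ≤ |ω| / n + 1 / n := add_le_add h1 h2
      _ = (|ω| + 1) * (n : ℝ)⁻¹ := by field_simp
  -- limits
  have hqq : Tendsto (fun n : ℕ => π * (n : ℝ)) atTop atTop :=
    Tendsto.const_mul_atTop Real.pi_pos tendsto_natCast_atTop_atTop
  have l1 : Tendsto (fun n : ℕ => (π * (n : ℝ))⁻¹) atTop (𝓝 0) := hqq.inv_tendsto_atTop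
  have lninv : Tendsto (fun n : ℕ => ((n : ℝ))⁻¹) atTop (𝓝 0) :=
    tendsto_inv_atTop_zero.comp tendsto_natCast_atTop_atTop
  have hE0 : Tendsto E atTop (𝓝 0) := by
    refine squeeze_zero_norm' (a := fun n : ℕ => (|ω| + 1) * ((n:ℝ))⁻¹) ?_
      (by simpa using lninv.const_mul (|ω| + 1))
    filter_upwards [hκ1, eventually_ge_atTop 1] with n hκn hn
    exact hEbound n hn hκn
  -- ratio limit
  have lratio : Tendsto (fun n : ℕ => ρ n / (π * n)) atTop (𝓝 1) := by
    have l0 : Tendsto (fun n : ℕ => 1 + E n * (π * (n : ℝ))⁻¹) atTop (𝓝 1) := by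
      have := (hE0.mul l1).const_add 1
      simpa using this
    refine l0.congr' ?_
    filter_upwards [eventually_ge_atTop 1] with n hn
    have hnpos : (0:ℝ) < n := by exact_mod_cast hn
    have hπn : (π * (n:ℝ)) ≠ 0 := by positivity
    rw [hρE n hn]
    field_simp
  have lqp : Tendsto (fun n : ℕ => π * (n : ℝ) / ρ n) atTop (𝓝 1) := by
    have := lratio.inv₀ one_ne_zero
    have h2 : Tendsto (fun n : ℕ => (ρ n / (π * (n:ℝ)))⁻¹) atTop (𝓝 1) := by
      simpa using this
    exact h2.congr fun n => by rw [inv_div]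
  -- cos and sin limits
  have hone : ∀ n : ℕ, ((-1:ℝ)) ^ n * (-1:ℝ) ^ n = 1 := by
    intro n; rw [← mul_pow]; norm_num
  have hcosn : ∀ n : ℕ, Real.cos (π * n) = (-1:ℝ) ^ n := by
    intro n
    rw [mul_comm]
    simpa using Real.cos_nat_mul_pi_sub 0 n
  have hsinn : ∀ n : ℕ, Real.sin (π * n) = 0 := by
    intro n; rw [mul_comm]; exact Real.sin_nat_mul_pi n
  have hevcos : (fun n : ℕ => Real.cos (E n)) =ᶠ[atTop]
      fun n : ℕ => (-1:ℝ) ^ n * Real.cos (ρ n) := by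
    filter_upwards [eventually_ge_atTop 1] with n hn
    rw [hρE n hn]
    have hca := Real.cos_add (π * (n:ℝ)) (E n)
    rw [hcosn n, hsinn n] at hca
    linear_combination (-(-1:ℝ)^n) * hca - Real.cos (E n) * hone n
  have hevsin : (fun n : ℕ => Real.sin (E n)) =ᶠ[atTop]
      fun n : ℕ => (-1:ℝ) ^ n * Real.sin (ρ n) := by
    filter_upwards [eventually_ge_atTop 1] with n hn
    rw [hρE n hn]
    have hsa := Real.sin_add (π * (n:ℝ)) (E n)
    rw [hcosn n, hsinn n] at hsa
    linear_combination (-(-1:ℝ)^n) * hsa - Real.sin (E n) * hone n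
  have lcos : Tendsto (fun n : ℕ => (-1:ℝ) ^ n * Real.cos (ρ n)) atTop (𝓝 1) := by
    have h : Tendsto (fun n : ℕ => Real.cos (E n)) atTop (𝓝 1) := by
      simpa [Function.comp_def] using (Real.continuous_cos.tendsto 0).comp hE0
    exact h.congr' hevcos
  have lsin : Tendsto (fun n : ℕ => (-1:ℝ) ^ n * Real.sin (ρ n)) atTop (𝓝 0) := by
    have h : Tendsto (fun n : ℕ => Real.sin (E n)) atTop (𝓝 0) := by
      simpa [Function.comp_def] using (Real.continuous_sin.tendsto 0).comp hE0
    exact h.congr' hevsin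
  -- G and G' limits
  have lG' : Tendsto (fun n : ℕ => (-1:ℝ) ^ n * G' (ρ n) * (π * (n:ℝ))⁻¹) atTop (𝓝 0) := by
    refine squeeze_zero_norm (a := fun n : ℕ => Cg * |(π * (n:ℝ))⁻¹|) (fun n => ?_)
      (by simpa using (l1.abs).const_mul Cg)
    rw [Real.norm_eq_abs, abs_mul, abs_mul, abs_pow, abs_neg, abs_one, one_pow, one_mul]
    exact mul_le_mul_of_nonneg_right (hG'b _) (abs_nonneg _)
  have lG : Tendsto (fun n : ℕ => (-1:ℝ) ^ n * G (ρ n) * ((π * (n:ℝ))⁻¹) ^ 2) atTop (𝓝 0) := by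
    refine squeeze_zero_norm (a := fun n : ℕ => Cg * |((π * (n:ℝ))⁻¹) ^ 2|) (fun n => ?_)
      (by simpa using ((l1.pow 2).abs).const_mul Cg)
    rw [Real.norm_eq_abs, abs_mul, abs_mul, abs_pow, abs_neg, abs_one, one_pow, one_mul]
    exact mul_le_mul_of_nonneg_right (hGb _) (abs_nonneg _)
  -- the limiting decomposition
  set f : ℕ → ℝ := fun n =>
    (π * (n:ℝ) / ρ n) ^ 2 * ((-1:ℝ) ^ n * Real.cos (ρ n))
      - (1 + ω) * ((π * (n:ℝ) / ρ n) ^ 3 * ((-1:ℝ) ^ n * Real.sin (ρ n) * (π * (n:ℝ))⁻¹))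
      - 2 * ω * ((π * (n:ℝ) / ρ n) ^ 4 * ((-1:ℝ) ^ n * Real.cos (ρ n) * ((π * (n:ℝ))⁻¹) ^ 2))
      + (π * (n:ℝ) / ρ n) ^ 3 * ((-1:ℝ) ^ n * G' (ρ n) * (π * (n:ℝ))⁻¹)
      - 2 * ((π * (n:ℝ) / ρ n) ^ 4 * ((-1:ℝ) ^ n * G (ρ n) * ((π * (n:ℝ))⁻¹) ^ 2)) with hfdef
  have hf : Tendsto f atTop (𝓝 1) := by
    have hA : Tendsto (fun n : ℕ => (π * (n:ℝ) / ρ n) ^ 2 * ((-1:ℝ) ^ n * Real.cos (ρ n)))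
        atTop (𝓝 ((1:ℝ) ^ 2 * 1)) := (lqp.pow 2).mul lcos
    have hB : Tendsto (fun n : ℕ =>
        (1 + ω) * ((π * (n:ℝ) / ρ n) ^ 3 * ((-1:ℝ) ^ n * Real.sin (ρ n) * (π * (n:ℝ))⁻¹)))
        atTop (𝓝 ((1 + ω) * ((1:ℝ) ^ 3 * (0 * 0)))) := ((lqp.pow 3).mul (lsin.mul l1)).const_mul _
    have hC : Tendsto (fun n : ℕ =>
        2 * ω * ((π * (n:ℝ) / ρ n) ^ 4 * ((-1:ℝ) ^ n * Real.cos (ρ n) * ((π * (n:ℝ))⁻¹) ^ 2)))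
        atTop (𝓝 (2 * ω * ((1:ℝ) ^ 4 * (1 * (0:ℝ) ^ 2)))) :=
      ((lqp.pow 4).mul (lcos.mul (l1.pow 2))).const_mul _
    have hDd : Tendsto (fun n : ℕ =>
        (π * (n:ℝ) / ρ n) ^ 3 * ((-1:ℝ) ^ n * G' (ρ n) * (π * (n:ℝ))⁻¹))
        atTop (𝓝 ((1:ℝ) ^ 3 * 0)) := (lqp.pow 3).mul lG'
    have hEe : Tendsto (fun n : ℕ =>
        2 * ((π * (n:ℝ) / ρ n) ^ 4 * ((-1:ℝ) ^ n * G (ρ n) * ((π * (n:ℝ))⁻¹) ^ 2)))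
        atTop (𝓝 (2 * ((1:ℝ) ^ 4 * 0))) := ((lqp.pow 4).mul lG).const_mul _
    have comb := (((hA.sub hB).sub hC).add hDd).sub hEe
    have hval : (1:ℝ) ^ 2 * 1 - (1 + ω) * ((1:ℝ) ^ 3 * (0 * 0)) - 2 * ω * ((1:ℝ) ^ 4 * (1 * (0:ℝ) ^ 2))
        + (1:ℝ) ^ 3 * 0 - 2 * ((1:ℝ) ^ 4 * 0) = 1 := by norm_num
    rw [hval] at comb
    exact comb
  -- eventual equality of the target with f
  have hev : (fun n : ℕ =>
        2 * (π * n) ^ 2 * (-1) ^ n *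
          (deriv (fun x : ℝ =>
              Real.sin x / x + ω * Real.cos x / x ^ 2 +
                (∫ t in (0:ℝ)..1, g t * Real.cos (x * t)) / x ^ 2) (ρ n) /
            (2 * ρ n))) =ᶠ[atTop] f := by
    have h3 : ∀ᶠ n : ℕ in atTop, 2 * (|ω| + 1) ≤ (n : ℝ) :=
      tendsto_natCast_atTop_atTop.eventually_ge_atTop _
    filter_upwards [hκ1, eventually_ge_atTop 1, h3] with n hκn hn1 hn2
    have hnR : (1:ℝ) ≤ (n : ℝ) := by exact_mod_cast hn1
    have hnpos : (0:ℝ) < n := by linarith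
    have hπnpos : (0:ℝ) < π * n := by positivity
    have hEb : |E n| ≤ (|ω| + 1) * (n : ℝ)⁻¹ := hEbound n hn1 hκn
    have hEb2 : |E n| ≤ |ω| + 1 := by
      refine le_trans hEb ?_
      have : ((n:ℝ))⁻¹ ≤ 1 := by
        rw [inv_le_one_iff₀]; right; exact hnR
      nlinarith [abs_nonneg ω]
    have hEge : -(|ω| + 1) ≤ E n := by
      have := abs_le.1 hEb2
      linarith [this.1]
    have h3n : 3 * (n:ℝ) ≤ π * n := by nlinarith
    have hppos : (0:ℝ) < ρ n := by
      rw [hρE n hn1]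
      nlinarith
    have hpne : ρ n ≠ 0 := ne_of_gt hppos
    have hπnne : (π * (n:ℝ)) ≠ 0 := ne_of_gt hπnpos
    rw [hD (ρ n) hpne]
    simp only [hfdef]
    field_simp [hpne, hπnne]
  exact hf.congr' hev.symm
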